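/- arXiv:1912.12917 — 13 statements merged into one kernel-verified Lean document; each statement's English description precedes it below -/
import Mathlib

section
/- Let X be a biquandle. Then the binary operation a * b := (a ub b) ob⁻¹ b makes X a quandle, called Q(X): (i) a * a = a for all a ∈ X; (ii) for each b ∈ X the map a ↦ a * b is a bijection of X; (iii) (a * b) * c = (a * c) * (b * c) for all a, b, c ∈ X. -/
/-- A biquandle: a set with two binary operations `ub` (under) and `ob` (over)
satisfying the biquandle axioms (BQ1), (BQ2), (BQ3). -/
structure Biquandle (X : Type*) where
  ub : X → X → X
  ob : X → X → X
  bq1 : ∀ x, ub x x = ob x x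
  ub_bij : ∀ y, Function.Bijective fun x => ub x y
  ob_bij : ∀ y, Function.Bijective fun x => ob x y
  H_bij : Function.Bijective fun p : X × X => (ob p.2 p.1, ub p.1 p.2)
  bq3_ub : ∀ x y z, ub (ub x y) (ub z y) = ub (ub x z) (ob y z)
  bq3_ob : ∀ x y z, ob (ob x y) (ob z y) = ob (ob x z) (ub y z)
  bq3_mix : ∀ x y z, ob (ub x y) (ub z y) = ub (ob x z) (ob y z)

/-- The inverse right translation `ub⁻¹`: `ubInv x y` is the unique `z` with `ub z y = x`. -/
noncomputable def Biquandle.ubInv {X : Type*} (B : Biquandle X) (x y : X) : X :=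
  (Equiv.ofBijective _ (B.ub_bij y)).symm x

/-- The inverse right translation `ob⁻¹`: `obInv x y` is the unique `z` with `ob z y = x`. -/
noncomputable def Biquandle.obInv {X : Type*} (B : Biquandle X) (x y : X) : X :=
  (Equiv.ofBijective _ (B.ob_bij y)).symm x

/-- The quandle operation of `Q(X)`: `a * b := (a ub b) ob⁻¹ b`. -/
noncomputable def Biquandle.q {X : Type*} (B : Biquandle X) (a b : X) : X :=
  B.obInv (B.ub a b) b

/-- Relations of the associated group `As(X)` of a biquandle:
`x · (y ob x) = y · (x ub y)`. -/
def Biquandle.asRels {X : Type*} (B : Biquandle X) : Set (FreeGroup X) :=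
  {r | ∃ x y : X, r = FreeGroup.of x * FreeGroup.of (B.ob y x) *
      (FreeGroup.of y * FreeGroup.of (B.ub x y))⁻¹}

/-- Relations of the associated group `As(Q(X))` of the quandle `Q(X)`:
`x · y = y · (x * y)`. -/
def Biquandle.qRels {X : Type*} (B : Biquandle X) : Set (FreeGroup X) :=
  {r | ∃ a b : X, r = FreeGroup.of a * FreeGroup.of b *
      (FreeGroup.of b * FreeGroup.of (B.q a b))⁻¹}


lemma Biquandle.ob_obInv {X : Type*} (B : Biquandle X) (x y : X) :
    B.ob (B.obInv x y) y = x :=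
  (Equiv.ofBijective _ (B.ob_bij y)).apply_symm_apply x

lemma Biquandle.obInv_ob {X : Type*} (B : Biquandle X) (x y : X) :
    B.obInv (B.ob x y) y = x :=
  (Equiv.ofBijective _ (B.ob_bij y)).symm_apply_apply x

/-- For a biquandle `X`, the operation `a * b := (a ub b) ob⁻¹ b` makes `X`
a quandle `Q(X)`: idempotence, bijective right translations, and right self-distributivity. -/
theorem quandle_of_biquandle {X : Type*} (B : Biquandle X) :
    (∀ a : X, B.q a a = a) ∧
    (∀ b : X, Function.Bijective fun a => B.q a b) ∧
    (∀ a b c : X, B.q (B.q a b) c = B.q (B.q a c) (B.q b c)) := by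

  refine ⟨fun a => ?_, fun b => ?_, fun a b c => ?_⟩
  · rw [Biquandle.q, B.bq1, B.obInv_ob]
  · have : (fun a => B.q a b) =
        (Equiv.ofBijective _ (B.ob_bij b)).symm ∘ (fun a => B.ub a b) := rfl
    rw [this]
    exact (Equiv.ofBijective _ (B.ob_bij b)).symm.bijective.comp (B.ub_bij b)
  · set u := B.q a b with hu'
    set v := B.q a c with hv'
    set w := B.q b c with hw'
    have hu : B.ob u b = B.ub a b := B.ob_obInv _ _
    have hv : B.ob v c = B.ub a c := B.ob_obInv _ _
    have hw : B.ob w c = B.ub b c := B.ob_obInv _ _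
    set t := B.q u c with ht'
    have ht : B.ob t c = B.ub u c := B.ob_obInv _ _
    have key : B.ob (B.ob t w) (B.ub c w) = B.ob (B.ub v w) (B.ub c w) := by
      calc B.ob (B.ob t w) (B.ub c w) = B.ob (B.ob t c) (B.ob w c) := (B.bq3_ob t c w).symm
        _ = B.ob (B.ub u c) (B.ub b c) := by rw [ht, hw]
        _ = B.ub (B.ob u b) (B.ob c b) := B.bq3_mix u c b
        _ = B.ub (B.ub a b) (B.ob c b) := by rw [hu]
        _ = B.ub (B.ub a c) (B.ub b c) := (B.bq3_ub a c b).symm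
        _ = B.ub (B.ob v c) (B.ob w c) := by rw [hv, hw]
        _ = B.ob (B.ub v w) (B.ub c w) := (B.bq3_mix v w c).symm
    have htw : B.ob t w = B.ub v w := (B.ob_bij (B.ub c w)).1 key
    show t = B.q v w
    rw [Biquandle.q, ← htw, B.obInv_ob]
end

section
/- Let X be a biquandle. Then the diagonal map Δ : X → X, Δ(x) = x ob x (which equals x ub x by (BQ1)), is a bijection; equivalently, there exists a unique map k : X → X satisfying k(x) ob k(x) = x for all x ∈ X, and this k is a bijection. -/
/-- The diagonal map `Δ(x) = x ob x` of a biquandle is a bijection;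
equivalently there is a unique map `k` with `k(x) ob k(x) = x` for all `x`, and any
such `k` is a bijection. -/
theorem diagonal_bijective {X : Type*} (B : Biquandle X) :
    Function.Bijective (fun x => B.ob x x) ∧
    (∃! k : X → X, ∀ x, B.ob (k x) (k x) = x) ∧
    (∀ k : X → X, (∀ x, B.ob (k x) (k x) = x) → Function.Bijective k) := by
  -- Injectivity of the diagonal map
  have hinj : Function.Injective (fun x => B.ob x x) := by
    intro x y h
    simp only at h
    have hx : ((fun p : X × X => (B.ob p.2 p.1, B.ub p.1 p.2)) (x, x)) =
        ((fun p : X × X => (B.ob p.2 p.1, B.ub p.1 p.2)) (y, y)) := by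
      simp only [Prod.mk.injEq]
      exact ⟨h, by rw [B.bq1, B.bq1, h]⟩
    have := B.H_bij.1 hx
    exact congrArg Prod.fst this
  -- Surjectivity of the diagonal map
  have hsurj : Function.Surjective (fun x => B.ob x x) := by
    intro a
    obtain ⟨⟨x, y⟩, hxy⟩ := B.H_bij.2 (a, a)
    simp only [Prod.mk.injEq] at hxy
    obtain ⟨h1, h2⟩ := hxy   -- h1 : B.ob y x = a, h2 : B.ub x y = a
    -- For every p, `p ub y = p ub x`
    have key : ∀ p, B.ub p y = B.ub p x := by
      intro p
      have h3 := B.bq3_ub p y x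
      rw [h1, h2] at h3
      exact (B.ub_bij a).1 h3
    refine ⟨x, ?_⟩
    have hx : B.ub x x = a := by rw [← key x, h2]
    simpa [B.bq1 x] using hx
  have hbij : Function.Bijective (fun x => B.ob x x) := ⟨hinj, hsurj⟩
  refine ⟨hbij, ?_, ?_⟩
  · -- unique existence of k
    let e := Equiv.ofBijective _ hbij
    refine ⟨e.symm, ?_, ?_⟩
    · intro x
      exact e.apply_symm_apply x
    · intro k hk
      funext x
      apply hinj
      show B.ob (k x) (k x) = B.ob (e.symm x) (e.symm x)
      rw [hk x]
      exact (e.apply_symm_apply x).symm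
  · -- any such k is bijective
    intro k hk
    constructor
    · intro x y h
      rw [← hk x, ← hk y, h]
    · intro x
      refine ⟨B.ob x x, ?_⟩
      apply hinj
      show B.ob (k (B.ob x x)) (k (B.ob x x)) = B.ob x x
      exact hk _
end

section
/- Let X be a biquandle with associated group As(X). The assignment sending each generator y ∈ X to the permutation (· ub y) of X extends to a (unique) group homomorphism As(X) → Perm(X); that is, the permutations (· ub y) satisfy the defining relations of As(X), so X carries a right As(X)-action `·` with x · ι(y) = x ub y and x · ι(y)⁻¹ = x ub⁻¹ y. -/
/-- The permutations `(· ub y)` satisfy the defining relations of `As(X)`,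
so they extend (uniquely) to a group homomorphism from `As(X)` to permutations of `X`
(acting on the right, whence the opposite group), giving a right `As(X)`-action with
`x · ι(y) = x ub y` and `x · ι(y)⁻¹ = x ub⁻¹ y`. -/
theorem as_action_ub {X : Type*} (B : Biquandle X) :
    ∃! f : PresentedGroup B.asRels →* (Equiv.Perm X)ᵐᵒᵖ,
      (∀ y : X, f (PresentedGroup.of y) =
        MulOpposite.op (Equiv.ofBijective _ (B.ub_bij y))) ∧
      (∀ x y : X, (f (PresentedGroup.of y))⁻¹.unop x = B.ubInv x y) := by
  classical
  set F : X → (Equiv.Perm X)ᵐᵒᵖ :=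
    fun y => MulOpposite.op (Equiv.ofBijective _ (B.ub_bij y)) with hF
  have hrel : ∀ r ∈ B.asRels, FreeGroup.lift F r = 1 := by
    rintro r ⟨x, y, rfl⟩
    simp only [map_mul, map_inv, FreeGroup.lift_apply_of, hF]
    rw [mul_inv_eq_one]
    apply MulOpposite.unop_injective
    ext z
    simp only [MulOpposite.unop_mul, Equiv.Perm.mul_apply, MulOpposite.unop_op,
      Equiv.ofBijective_apply]
    exact (B.bq3_ub z y x).symm
  refine ⟨PresentedGroup.toGroup hrel, ⟨fun y => PresentedGroup.toGroup.of hrel, ?_⟩, ?_⟩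
  · intro x y
    rw [PresentedGroup.toGroup.of hrel]
    rfl
  · rintro g ⟨hg, -⟩
    ext x
    exact PresentedGroup.toGroup.unique hrel g hg
end

section
/- Let X be a biquandle with associated group As(X). The assignment sending each generator y ∈ X to the permutation (· ob y) of X extends to a (unique) group homomorphism As(X) → Perm(X); that is, the permutations (· ob y) satisfy the defining relations of As(X), so X carries a right As(X)-action ⋄ with x ⋄ ι(y) = x ob y and x ⋄ ι(y)⁻¹ = x ob⁻¹ y. -/
/-- The permutations `(· ob y)` satisfy the defining relations of `As(X)`,
so they extend (uniquely) to a group homomorphism from `As(X)` to permutations of `X`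
(acting on the right, whence the opposite group), giving a right `As(X)`-action `⋄` with
`x ⋄ ι(y) = x ob y` and `x ⋄ ι(y)⁻¹ = x ob⁻¹ y`. -/
theorem as_action_ob {X : Type*} (B : Biquandle X) :
    ∃! f : PresentedGroup B.asRels →* (Equiv.Perm X)ᵐᵒᵖ,
      (∀ y : X, f (PresentedGroup.of y) =
        MulOpposite.op (Equiv.ofBijective _ (B.ob_bij y))) ∧
      (∀ x y : X, (f (PresentedGroup.of y))⁻¹.unop x = B.obInv x y) := by
  set F : X → (Equiv.Perm X)ᵐᵒᵖ := fun y =>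
    MulOpposite.op (Equiv.ofBijective _ (B.ob_bij y)) with hF
  have hrel : ∀ r ∈ B.asRels, FreeGroup.lift F r = 1 := by
    rintro r ⟨x, y, rfl⟩
    simp only [map_mul, map_inv, FreeGroup.lift_apply_of, hF]
    rw [mul_inv_eq_one]
    rw [← MulOpposite.op_mul, ← MulOpposite.op_mul]
    congr 1
    ext z
    simp only [Equiv.Perm.mul_apply, Equiv.ofBijective_apply]
    exact B.bq3_ob z x y
  refine ⟨PresentedGroup.toGroup hrel, ⟨fun y => PresentedGroup.toGroup.of hrel,
    fun x y => ?_⟩, fun g hg => ?_⟩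
  · rw [PresentedGroup.toGroup.of hrel]
    rfl
  · ext z
    exact PresentedGroup.toGroup.unique hrel g hg.1
end

section
/- Let X be a biquandle, let Q(X) be its associated quandle with a * b := (a ub b) ob⁻¹ b, let As(Q(X)) be the associated group of Q(X), and let k : X → X be the unique map with k(x) ob k(x) = x. Then there exists a unique map ψ : As(Q(X)) × X → X satisfying: ψ(1, a) = a; ψ(p · ι(b), a) = ψ(p,a) ob ψ(p,b); and ψ(p · ι(b)⁻¹, a) = ψ(p,a) ob⁻¹ k(ψ(p,b)), for all p ∈ As(Q(X)) and a, b ∈ X. -/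
namespace BQAux

variable {X : Type*} (B : Biquandle X)

lemma ob_obInv (x y : X) : B.ob (B.obInv x y) y = x :=
  (Equiv.ofBijective _ (B.ob_bij y)).apply_symm_apply x

lemma obInv_ob (x y : X) : B.obInv (B.ob x y) y = x :=
  (Equiv.ofBijective _ (B.ob_bij y)).symm_apply_apply x

lemma ob_right_inj {y : X} {x x' : X} (h : B.ob x y = B.ob x' y) : x = x' :=
  (B.ob_bij y).1 h

lemma ob_q (a b : X) : B.ob (B.q a b) b = B.ub a b := ob_obInv B _ _

lemma diag_inj : Function.Injective (fun x => B.ob x x) := by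
  intro x y h
  have : (fun p : X × X => (B.ob p.2 p.1, B.ub p.1 p.2)) (x, x)
      = (fun p : X × X => (B.ob p.2 p.1, B.ub p.1 p.2)) (y, y) := by
    simp only [B.bq1, h]
  exact congrArg Prod.fst (B.H_bij.1 this)

variable {k : X → X} (hk : ∀ x, B.ob (k x) (k x) = x)

lemma k_diag (hk : ∀ x, B.ob (k x) (k x) = x) (x : X) : k (B.ob x x) = x :=
  diag_inj B (by simpa using hk (B.ob x x))

/-- A function is "good" if it intertwines the quandle relation. -/
def Good (f : X → X) : Prop :=
  ∀ a b, B.ob (f (B.q a b)) (f b) = B.ub (f a) (f b)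

lemma good_id : Good B (id : X → X) := fun a b => ob_q B a b

lemma good_sigma {f : X → X} (hf : Good B f) (c : X) :
    Good B (fun a => B.ob (f a) (f c)) := by
  intro a b
  dsimp only
  rw [B.bq3_ob (f (B.q a b)) (f c) (f b), hf a b, B.bq3_mix (f a) (f b) (f c)]

lemma good_tau {f : X → X} (hf : Good B f) (c : X) :
    Good B (fun a => B.obInv (f a) (k (f c))) := by
  intro a b
  dsimp only
  set c' := k (f c) with hc'
  set u := B.obInv (f (B.q a b)) c'
  set v := B.obInv (f b) c'
  set w := B.obInv (f a) c'
  have h1 : B.ob u c' = f (B.q a b) := ob_obInv B _ _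
  have h2 : B.ob v c' = f b := ob_obInv B _ _
  have h3 : B.ob w c' = f a := ob_obInv B _ _
  have h := hf a b
  rw [← h1, ← h2, ← h3] at h
  rw [B.bq3_ob u c' v, ← B.bq3_mix w v c'] at h
  exact ob_right_inj B h

/-- The permutation of good functions given by `f ↦ (a ↦ f a ob f c)`. -/
noncomputable def sigma (c : X) : {f : X → X // Good B f} ≃ {f : X → X // Good B f} where
  toFun f := ⟨fun a => B.ob (f.1 a) (f.1 c), good_sigma B f.2 c⟩
  invFun f := ⟨fun a => B.obInv (f.1 a) (k (f.1 c)), good_tau B (k := k) f.2 c⟩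
  left_inv f := by
    ext a
    dsimp only
    rw [k_diag B hk (f.1 c), obInv_ob]
  right_inv f := by
    ext a
    dsimp only
    have hc : B.obInv (f.1 c) (k (f.1 c)) = k (f.1 c) := by
      apply ob_right_inj B (y := k (f.1 c))
      rw [ob_obInv, hk]
    rw [hc, ob_obInv]

lemma sigma_rel (a b : X) :
    (sigma B hk b) * (sigma B hk a) = (sigma B hk (B.q a b)) * (sigma B hk b) := by
  ext f a'
  · show B.ob (B.ob (f.1 a') (f.1 a)) (B.ob (f.1 b) (f.1 a))
      = B.ob (B.ob (f.1 a') (f.1 b)) (B.ob (f.1 (B.q a b)) (f.1 b))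
    rw [B.bq3_ob (f.1 a') (f.1 a) (f.1 b), f.2 a b]

lemma lift_rels_eq_one :
    ∀ r ∈ B.qRels, FreeGroup.lift
      (fun c => MulOpposite.op (sigma B hk c) :
        X → (Equiv.Perm {f : X → X // Good B f})ᵐᵒᵖ) r = 1 := by
  rintro r ⟨a, b, rfl⟩
  rw [map_mul, map_inv, map_mul, map_mul]
  simp only [FreeGroup.lift_apply_of]
  rw [mul_inv_eq_one, ← MulOpposite.op_mul, ← MulOpposite.op_mul]
  exact congrArg MulOpposite.op (sigma_rel B hk a b)

end BQAux

open BQAux in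
/-- There is a unique map `ψ : As(Q(X)) × X → X` with `ψ(1,a) = a`,
`ψ(p·ι(b),a) = ψ(p,a) ob ψ(p,b)` and `ψ(p·ι(b)⁻¹,a) = ψ(p,a) ob⁻¹ k(ψ(p,b))`,
where `k` is the unique map with `k(x) ob k(x) = x`. -/
theorem psi_exists_unique {X : Type*} (B : Biquandle X)
    (k : X → X) (hk : ∀ x, B.ob (k x) (k x) = x) :
    ∃! ψ : PresentedGroup B.qRels × X → X,
      (∀ a : X, ψ (1, a) = a) ∧
      (∀ (p : PresentedGroup B.qRels) (a b : X),
        ψ (p * PresentedGroup.of b, a) = B.ob (ψ (p, a)) (ψ (p, b))) ∧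
      (∀ (p : PresentedGroup B.qRels) (a b : X),
        ψ (p * (PresentedGroup.of b)⁻¹, a) = B.obInv (ψ (p, a)) (k (ψ (p, b)))) := by
  classical
  set S := {f : X → X // Good B f}
  let Φ : PresentedGroup B.qRels →* (Equiv.Perm S)ᵐᵒᵖ :=
    PresentedGroup.toGroup (lift_rels_eq_one B hk)
  have hΦof : ∀ b : X, Φ (PresentedGroup.of b) = MulOpposite.op (sigma B hk b) :=
    fun b => PresentedGroup.toGroup.of _
  let idS : S := ⟨id, good_id B⟩
  let ψ : PresentedGroup B.qRels × X → X := fun pa => ((Φ pa.1).unop idS).1 pa.2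
  have h1 : ∀ a : X, ψ (1, a) = a := by
    intro a
    show (((Φ 1).unop idS).1 a) = a
    rw [map_one]
    rfl
  have h2 : ∀ (p : PresentedGroup B.qRels) (a b : X),
      ψ (p * PresentedGroup.of b, a) = B.ob (ψ (p, a)) (ψ (p, b)) := by
    intro p a b
    show (((Φ (p * PresentedGroup.of b)).unop idS).1 a) = _
    rw [map_mul, hΦof, MulOpposite.unop_mul, MulOpposite.unop_op]
    rfl
  have h3 : ∀ (p : PresentedGroup B.qRels) (a b : X),
      ψ (p * (PresentedGroup.of b)⁻¹, a) = B.obInv (ψ (p, a)) (k (ψ (p, b))) := by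
    intro p a b
    show (((Φ (p * (PresentedGroup.of b)⁻¹)).unop idS).1 a) = _
    rw [map_mul, map_inv, hΦof, MulOpposite.unop_mul, MulOpposite.unop_inv,
      MulOpposite.unop_op]
    rfl
  refine ⟨ψ, ⟨h1, h2, h3⟩, ?_⟩
  rintro ψ' ⟨h1', h2', h3'⟩
  -- uniqueness
  have key : ∀ p : PresentedGroup B.qRels, ∀ a, ψ' (p, a) = ψ (p, a) := by
    let P : PresentedGroup B.qRels → Prop := fun p => ∀ a, ψ' (p, a) = ψ (p, a)
    have hP1 : P 1 := fun a => by rw [h1' a, h1 a]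
    let T : Subgroup (PresentedGroup B.qRels) :=
      { carrier := {g | ∀ p, P p ↔ P (p * g)}
        one_mem' := by intro p; simp
        mul_mem' := by
          intro g h hg hh p
          rw [hg p, hh (p * g), mul_assoc]
        inv_mem' := by
          intro g hg p
          have := hg (p * g⁻¹)
          rw [inv_mul_cancel_right] at this
          exact this.symm }
    have hofT : ∀ b : X, PresentedGroup.of b ∈ T := by
      intro b p
      constructor
      · intro hp a
        rw [h2' p a b, h2 p a b, hp a, hp b]
      · intro hp a
        have := hp
        have h0 : P (p * PresentedGroup.of b * (PresentedGroup.of b)⁻¹) := by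
          intro a'
          rw [h3' _ a' b, h3 _ a' b, hp a', hp b]
        rw [mul_inv_cancel_right] at h0
        exact h0 a
    have hT : ∀ g : PresentedGroup B.qRels, g ∈ T := by
      intro g
      have : Subgroup.closure (Set.range
          (PresentedGroup.of : X → PresentedGroup B.qRels)) ≤ T :=
        Subgroup.closure_le T |>.2 (by rintro _ ⟨b, rfl⟩; exact hofT b)
      have htop := PresentedGroup.closure_range_of B.qRels
      rw [htop] at this
      exact this (Subgroup.mem_top g)
    intro p
    have := (hT p 1).1 hP1
    rw [one_mul] at this
    exact this
  funext pa
  exact key pa.1 pa.2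
end

section
/- Let X be a biquandle, Q(X) its associated quandle, ψ : As(Q(X)) × X → X the map satisfying ψ(1,a)=a, ψ(p·ι(b),a) = ψ(p,a) ob ψ(p,b), ψ(p·ι(b)⁻¹,a) = ψ(p,a) ob⁻¹ k(ψ(p,b)), and let ι' : X → As(X) be the canonical map into the associated group of X. Then there exists a unique map ψ_As : As(Q(X)) → As(X) satisfying: ψ_As(1) = 1; ψ_As(p · ι(b)) = ψ_As(p) · ι'(ψ(p,b)); and ψ_As(p · ι(b)⁻¹) = ψ_As(p) · ι'(ψ(p·ι(b)⁻¹, b))⁻¹, for all p ∈ As(Q(X)) and b ∈ X. -/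
lemma Biquandle.ob_q {X : Type*} (B : Biquandle X) (x y : X) :
    B.ob (B.q x y) y = B.ub x y :=
  B.ob_obInv _ _

lemma Biquandle.q_ob {X : Type*} (B : Biquandle X) (x y z : X) :
    B.ob (B.q x y) z = B.q (B.ob x z) (B.ob y z) := by
  have h : B.ob (B.ob (B.q x y) z) (B.ob y z) = B.ub (B.ob x z) (B.ob y z) := by
    rw [B.bq3_ob (B.q x y) z y, B.ob_q, B.bq3_mix]
  calc B.ob (B.q x y) z
      = B.obInv (B.ob (B.ob (B.q x y) z) (B.ob y z)) (B.ob y z) := (B.obInv_ob _ _).symm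
    _ = B.q (B.ob x z) (B.ob y z) := by rw [h]; rfl

lemma Biquandle.q_obInv {X : Type*} (B : Biquandle X) (x y d : X) :
    B.obInv (B.q x y) d = B.q (B.obInv x d) (B.obInv y d) := by
  have h : B.ob (B.q (B.obInv x d) (B.obInv y d)) d = B.q x y := by
    rw [B.q_ob, B.ob_obInv, B.ob_obInv]
  rw [← h, B.obInv_ob]

/-- The permutation of `As(Q(X)) × As(X)` induced by a generator `b`. -/
noncomputable def psiPerm {X : Type*} (B : Biquandle X)
    (ψ : PresentedGroup B.qRels × X → X) (b : X) :
    Equiv.Perm (PresentedGroup B.qRels × PresentedGroup B.asRels) where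
  toFun t := (t.1 * PresentedGroup.of b, t.2 * PresentedGroup.of (ψ (t.1, b)))
  invFun t := (t.1 * (PresentedGroup.of b)⁻¹,
    t.2 * (PresentedGroup.of (ψ (t.1 * (PresentedGroup.of b)⁻¹, b)))⁻¹)
  left_inv t := by simp
  right_inv t := by simp

/-- There is a unique map `ψ_As : As(Q(X)) → As(X)` with `ψ_As(1) = 1`,
`ψ_As(p·ι(b)) = ψ_As(p)·ι'(ψ(p,b))` and `ψ_As(p·ι(b)⁻¹) = ψ_As(p)·ι'(ψ(p·ι(b)⁻¹,b))⁻¹`. -/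
theorem psiAs_exists_unique {X : Type*} (B : Biquandle X)
    (k : X → X) (hk : ∀ x, B.ob (k x) (k x) = x)
    (ψ : PresentedGroup B.qRels × X → X)
    (h1 : ∀ a : X, ψ (1, a) = a)
    (h2 : ∀ (p : PresentedGroup B.qRels) (a b : X),
      ψ (p * PresentedGroup.of b, a) = B.ob (ψ (p, a)) (ψ (p, b)))
    (h3 : ∀ (p : PresentedGroup B.qRels) (a b : X),
      ψ (p * (PresentedGroup.of b)⁻¹, a) = B.obInv (ψ (p, a)) (k (ψ (p, b)))) :
    ∃! F : PresentedGroup B.qRels → PresentedGroup B.asRels,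
      F 1 = 1 ∧
      (∀ (p : PresentedGroup B.qRels) (b : X),
        F (p * PresentedGroup.of b) = F p * PresentedGroup.of (ψ (p, b))) ∧
      (∀ (p : PresentedGroup B.qRels) (b : X),
        F (p * (PresentedGroup.of b)⁻¹) =
          F p * (PresentedGroup.of (ψ (p * (PresentedGroup.of b)⁻¹, b)) :
            PresentedGroup B.asRels)⁻¹) := by
  -- every element lies in the closure of the generators
  have mem_top : ∀ p : PresentedGroup B.qRels,
      p ∈ Subgroup.closure (Set.range (PresentedGroup.of : X → PresentedGroup B.qRels)) := by
    intro p
    rw [PresentedGroup.closure_range_of]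
    exact Subgroup.mem_top p
  -- the defining relation of As(Q(X))
  have qrel : ∀ a b : X,
      (PresentedGroup.of a * PresentedGroup.of b : PresentedGroup B.qRels)
        = PresentedGroup.of b * PresentedGroup.of (B.q a b) := by
    intro a b
    have hr : (FreeGroup.of a * FreeGroup.of b *
        (FreeGroup.of b * FreeGroup.of (B.q a b))⁻¹) ∈ Subgroup.normalClosure B.qRels :=
      Subgroup.subset_normalClosure ⟨a, b, rfl⟩
    have h0 : (PresentedGroup.mk B.qRels) (FreeGroup.of a * FreeGroup.of b *
        (FreeGroup.of b * FreeGroup.of (B.q a b))⁻¹) = 1 :=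
      (QuotientGroup.eq_one_iff _).2 hr
    rw [map_mul, map_mul, map_inv, map_mul, mul_inv_eq_one] at h0
    exact h0
  -- the defining relation of As(X)
  have asrel : ∀ x y : X,
      (PresentedGroup.of x * PresentedGroup.of (B.ob y x) : PresentedGroup B.asRels)
        = PresentedGroup.of y * PresentedGroup.of (B.ub x y) := by
    intro x y
    have hr : (FreeGroup.of x * FreeGroup.of (B.ob y x) *
        (FreeGroup.of y * FreeGroup.of (B.ub x y))⁻¹) ∈ Subgroup.normalClosure B.asRels :=
      Subgroup.subset_normalClosure ⟨x, y, rfl⟩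
    have h0 : (PresentedGroup.mk B.asRels) (FreeGroup.of x * FreeGroup.of (B.ob y x) *
        (FreeGroup.of y * FreeGroup.of (B.ub x y))⁻¹) = 1 :=
      (QuotientGroup.eq_one_iff _).2 hr
    rw [map_mul, map_mul, map_inv, map_mul, mul_inv_eq_one] at h0
    exact h0
  -- ψ(p, ·) is a quandle homomorphism
  have ψq : ∀ (p : PresentedGroup B.qRels) (a b : X),
      ψ (p, B.q a b) = B.q (ψ (p, a)) (ψ (p, b)) := by
    intro p
    refine Subgroup.closure_induction_right
      (p := fun g _ => ∀ a b : X, ψ (g, B.q a b) = B.q (ψ (g, a)) (ψ (g, b)))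
      ?_ ?_ ?_ (mem_top p)
    · intro a b
      rw [h1, h1, h1]
    · rintro x _ y ⟨c, rfl⟩ IH a b
      rw [h2, h2, h2, IH, B.q_ob]
    · rintro x _ y ⟨c, rfl⟩ IH a b
      rw [h3, h3, h3, IH, B.q_obInv]
  -- the relators of As(Q(X)) act trivially
  have hrel : ∀ r ∈ B.qRels,
      FreeGroup.lift (fun c => (psiPerm B ψ c).symm) r = 1 := by
    rintro r ⟨a, b, rfl⟩
    rw [map_mul, map_mul, map_inv, map_mul, mul_inv_eq_one]
    have key : psiPerm B ψ b * psiPerm B ψ a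
        = psiPerm B ψ (B.q a b) * psiPerm B ψ b := by
      refine Equiv.ext fun t => ?_
      show ((t.1 * PresentedGroup.of a) * PresentedGroup.of b,
          (t.2 * PresentedGroup.of (ψ (t.1, a)))
            * PresentedGroup.of (ψ (t.1 * PresentedGroup.of a, b)))
        = ((t.1 * PresentedGroup.of b) * PresentedGroup.of (B.q a b),
          (t.2 * PresentedGroup.of (ψ (t.1, b)))
            * PresentedGroup.of (ψ (t.1 * PresentedGroup.of b, B.q a b)))
      have e1 : ψ (t.1 * PresentedGroup.of a, b) = B.ob (ψ (t.1, b)) (ψ (t.1, a)) := h2 _ _ _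
      have e2 : ψ (t.1 * PresentedGroup.of b, B.q a b)
          = B.ub (ψ (t.1, a)) (ψ (t.1, b)) := by
        rw [h2, ψq, B.ob_q]
      rw [e1, e2, mul_assoc, mul_assoc, mul_assoc, mul_assoc, qrel, asrel]
    calc (psiPerm B ψ a).symm * (psiPerm B ψ b).symm
        = (psiPerm B ψ b * psiPerm B ψ a)⁻¹ := by
          rw [mul_inv_rev, Equiv.Perm.inv_def, Equiv.Perm.inv_def]
      _ = (psiPerm B ψ (B.q a b) * psiPerm B ψ b)⁻¹ := by rw [key]
      _ = (psiPerm B ψ b).symm * (psiPerm B ψ (B.q a b)).symm := by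
          rw [mul_inv_rev, Equiv.Perm.inv_def, Equiv.Perm.inv_def]
  set Φ := PresentedGroup.toGroup hrel with hΦ
  have Φof : ∀ c : X, Φ (PresentedGroup.of c) = (psiPerm B ψ c).symm := fun c =>
    PresentedGroup.toGroup.of hrel
  have Φof' : ∀ c : X, Φ (PresentedGroup.of c)⁻¹ = psiPerm B ψ c := by
    intro c
    rw [map_inv, Φof, Equiv.Perm.inv_def, Equiv.symm_symm]
  -- first component invariant
  have hfst : ∀ p : PresentedGroup B.qRels,
      ∀ t : PresentedGroup B.qRels × PresentedGroup B.asRels, (Φ p⁻¹ t).1 = t.1 * p := by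
    intro p
    refine Subgroup.closure_induction
      (p := fun g _ => ∀ t : PresentedGroup B.qRels × PresentedGroup B.asRels,
        (Φ g⁻¹ t).1 = t.1 * g) ?_ ?_ ?_ ?_ (mem_top p)
    · rintro x ⟨c, rfl⟩ t
      rw [Φof']
      rfl
    · intro t
      simp
    · intro x y _ _ IHx IHy t
      have : Φ (x * y)⁻¹ t = Φ y⁻¹ (Φ x⁻¹ t) := by
        rw [mul_inv_rev, map_mul]
        rfl
      rw [this, IHy, IHx, mul_assoc]
    · intro x _ IH t
      have h0 : Φ x⁻¹ (Φ x⁻¹⁻¹ t) = t := by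
        rw [← Equiv.Perm.mul_apply, ← map_mul]
        simp
      have := IH (Φ x⁻¹⁻¹ t)
      rw [h0] at this
      rw [this, mul_inv_cancel_right]
  -- the candidate map
  refine ⟨fun p => (Φ p⁻¹ (1, 1)).2, ⟨?_, ?_, ?_⟩, ?_⟩
  · simp
  · intro p b
    have : Φ (p * PresentedGroup.of b)⁻¹ (1, 1)
        = psiPerm B ψ b (Φ p⁻¹ (1, 1)) := by
      rw [mul_inv_rev, map_mul, ← Φof' b]
      rfl
    show ((Φ (p * PresentedGroup.of b)⁻¹) (1, 1)).2 = (Φ p⁻¹ (1, 1)).2 * PresentedGroup.of (ψ (p, b))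
    rw [this]
    show (Φ p⁻¹ (1, 1)).2 * PresentedGroup.of (ψ ((Φ p⁻¹ (1, 1)).1, b))
      = (Φ p⁻¹ (1, 1)).2 * PresentedGroup.of (ψ (p, b))
    rw [hfst p (1, 1), one_mul]
  · intro p b
    have : Φ (p * (PresentedGroup.of b)⁻¹)⁻¹ (1, 1)
        = (psiPerm B ψ b).symm (Φ p⁻¹ (1, 1)) := by
      rw [mul_inv_rev, inv_inv, map_mul, Φof]
      rfl
    show ((Φ (p * (PresentedGroup.of b)⁻¹)⁻¹) (1, 1)).2
      = (Φ p⁻¹ (1, 1)).2 * (PresentedGroup.of (ψ (p * (PresentedGroup.of b)⁻¹, b)))⁻¹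
    rw [this]
    show (Φ p⁻¹ (1, 1)).2
        * (PresentedGroup.of (ψ ((Φ p⁻¹ (1, 1)).1 * (PresentedGroup.of b)⁻¹, b)))⁻¹
      = (Φ p⁻¹ (1, 1)).2
        * (PresentedGroup.of (ψ (p * (PresentedGroup.of b)⁻¹, b)))⁻¹
    rw [hfst p (1, 1), one_mul]
  · intro G hG
    funext p
    refine Subgroup.closure_induction_right
      (p := fun g _ => G g = (Φ g⁻¹ (1, 1)).2) ?_ ?_ ?_ (mem_top p)
    · show G 1 = ((Φ (1 : PresentedGroup B.qRels)⁻¹) (1, 1)).2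
      rw [hG.1]
      simp
    · rintro x _ y ⟨c, rfl⟩ IH
      show G (x * PresentedGroup.of c) = (Φ (x * PresentedGroup.of c)⁻¹ (1, 1)).2
      rw [hG.2.1, IH]
      have : Φ (x * PresentedGroup.of c)⁻¹ (1, 1)
          = psiPerm B ψ c (Φ x⁻¹ (1, 1)) := by
        rw [mul_inv_rev, map_mul, ← Φof' c]
        rfl
      rw [this]
      show (Φ x⁻¹ (1, 1)).2 * PresentedGroup.of (ψ (x, c))
        = (Φ x⁻¹ (1, 1)).2 * PresentedGroup.of (ψ ((Φ x⁻¹ (1, 1)).1, c))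
      rw [hfst x (1, 1), one_mul]
    · rintro x _ y ⟨c, rfl⟩ IH
      show G (x * (PresentedGroup.of c)⁻¹) = (Φ (x * (PresentedGroup.of c)⁻¹)⁻¹ (1, 1)).2
      rw [hG.2.2, IH]
      have : Φ (x * (PresentedGroup.of c)⁻¹)⁻¹ (1, 1)
          = (psiPerm B ψ c).symm (Φ x⁻¹ (1, 1)) := by
        rw [mul_inv_rev, inv_inv, map_mul, Φof]
        rfl
      rw [this]
      show (Φ x⁻¹ (1, 1)).2 * (PresentedGroup.of (ψ (x * (PresentedGroup.of c)⁻¹, c)))⁻¹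
        = (Φ x⁻¹ (1, 1)).2
          * (PresentedGroup.of (ψ ((Φ x⁻¹ (1, 1)).1 * (PresentedGroup.of c)⁻¹, c)))⁻¹
      rw [hfst x (1, 1), one_mul]
end

section
/- Let X be a biquandle with associated group As(X), acting on X on the right by ⋄ with x ⋄ ι'(y) = x ob y, and define φ : As(X) × X → X by φ(g,x) = x ⋄ g⁻¹. Let Q(X) be the associated quandle of X and ι : X → As(Q(X)) the canonical map. Then there exists a unique map φ_As : As(X) → As(Q(X)) satisfying: φ_As(1) = 1; φ_As(g · ι'(x)) = φ_As(g) · ι(φ(g,x)); and φ_As(g · ι'(x)⁻¹) = φ_As(g) · ι(φ(g·ι'(x)⁻¹, x))⁻¹, for all g ∈ As(X) and x ∈ X. -/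
namespace BiquandlePhiAux

variable {X : Type*} (B : Biquandle X)

lemma ob_obInv (x y : X) : B.ob (B.obInv x y) y = x :=
  (Equiv.ofBijective _ (B.ob_bij y)).apply_symm_apply x

lemma obInv_ob (x y : X) : B.obInv (B.ob x y) y = x :=
  (Equiv.ofBijective _ (B.ob_bij y)).symm_apply_apply x

lemma q_ob (a b z : X) : B.q (B.ob a z) (B.ob b z) = B.ob (B.q a b) z := by
  have h1 : B.ob (B.ob (B.q a b) z) (B.ob b z) = B.ub (B.ob a z) (B.ob b z) := by
    rw [B.bq3_ob (B.q a b) z b]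
    have h2 : B.ob (B.q a b) b = B.ub a b := ob_obInv B _ b
    rw [h2, B.bq3_mix a b z]
  have h3 := congrArg (fun w => B.obInv w (B.ob b z)) h1
  simp only [obInv_ob] at h3
  exact h3.symm

lemma q_obInv (a b z : X) : B.q (B.obInv a z) (B.obInv b z) = B.obInv (B.q a b) z := by
  have h := q_ob B (B.obInv a z) (B.obInv b z) z
  rw [ob_obInv, ob_obInv] at h
  rw [h, obInv_ob]

lemma obInv_rel (a x y : X) :
    B.obInv (B.obInv a (B.ob y x)) x = B.obInv (B.obInv a (B.ub x y)) y := by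
  have h1 : B.ob (B.ob (B.obInv (B.obInv a (B.ob y x)) x) x) (B.ob y x) = a := by
    rw [ob_obInv, ob_obInv]
  rw [B.bq3_ob] at h1
  conv_rhs => rw [← h1, obInv_ob, obInv_ob]


lemma pres_rel {α : Type*} {rels : Set (FreeGroup α)} {r : FreeGroup α} (hr : r ∈ rels) :
    PresentedGroup.mk rels r = 1 :=
  (QuotientGroup.eq_one_iff r).2 (Subgroup.subset_normalClosure hr)

lemma qrel (a b : X) :
    (PresentedGroup.of a : PresentedGroup B.qRels) * PresentedGroup.of b =
      PresentedGroup.of b * PresentedGroup.of (B.q a b) := by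
  have h := pres_rel (rels := B.qRels) ⟨a, b, rfl⟩
  rw [map_mul, map_inv, map_mul, map_mul, mul_inv_eq_one] at h
  exact h

lemma asrel (x y : X) :
    (PresentedGroup.of x : PresentedGroup B.asRels) * PresentedGroup.of (B.ob y x) =
      PresentedGroup.of y * PresentedGroup.of (B.ub x y) := by
  have h := pres_rel (rels := B.asRels) ⟨x, y, rfl⟩
  rw [map_mul, map_inv, map_mul, map_mul, mul_inv_eq_one] at h
  exact h

/-- The endomorphism of `As(Q(X))` induced by `a ↦ a ob z`. -/
noncomputable def obHom (z : X) : PresentedGroup B.qRels →* PresentedGroup B.qRels :=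
  PresentedGroup.toGroup (f := fun a => (PresentedGroup.of (B.ob a z) : PresentedGroup B.qRels))
    (by
      rintro r ⟨a, b, rfl⟩
      rw [map_mul, map_inv, map_mul, map_mul, mul_inv_eq_one]
      simp only [FreeGroup.lift_apply_of]
      rw [← q_ob B a b z]
      exact qrel B (B.ob a z) (B.ob b z))

/-- The endomorphism of `As(Q(X))` induced by `a ↦ a ob⁻¹ z`. -/
noncomputable def obInvHom (z : X) : PresentedGroup B.qRels →* PresentedGroup B.qRels :=
  PresentedGroup.toGroup (f := fun a => (PresentedGroup.of (B.obInv a z) : PresentedGroup B.qRels))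
    (by
      rintro r ⟨a, b, rfl⟩
      rw [map_mul, map_inv, map_mul, map_mul, mul_inv_eq_one]
      simp only [FreeGroup.lift_apply_of]
      rw [← q_obInv B a b z]
      exact qrel B (B.obInv a z) (B.obInv b z))

/-- The automorphism of `As(Q(X))` induced by `a ↦ a ob⁻¹ z`. -/
noncomputable def obInvAut (z : X) : MulAut (PresentedGroup B.qRels) :=
  MonoidHom.toMulEquiv (obInvHom B z) (obHom B z)
    (by
      ext a
      simp only [MonoidHom.comp_apply, obInvHom, obHom, PresentedGroup.toGroup.of,
        MonoidHom.id_apply]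
      rw [ob_obInv])
    (by
      ext a
      simp only [MonoidHom.comp_apply, obInvHom, obHom, PresentedGroup.toGroup.of,
        MonoidHom.id_apply]
      rw [obInv_ob])

lemma obInvAut_of (z a : X) :
    obInvAut B z (PresentedGroup.of a) = PresentedGroup.of (B.obInv a z) := by
  simp [obInvAut, obInvHom, PresentedGroup.toGroup.of]

/-- The homomorphism `As(X) →* Aut(As(Q(X)))`, with `ι'(z)` acting by `a ↦ a ob⁻¹ z`. -/
noncomputable def phiHom : PresentedGroup B.asRels →* MulAut (PresentedGroup B.qRels) :=
  PresentedGroup.toGroup (f := fun z => obInvAut B z)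
    (by
      rintro r ⟨x, y, rfl⟩
      rw [map_mul, map_inv, map_mul, map_mul, mul_inv_eq_one]
      simp only [FreeGroup.lift_apply_of]
      refine MulEquiv.toMonoidHom_injective (PresentedGroup.ext fun a => ?_)
      simp only [MulEquiv.coe_toMonoidHom, MulAut.mul_apply, obInvAut_of]
      rw [obInv_rel B a x y])

lemma phiHom_of (z a : X) :
    phiHom B (PresentedGroup.of z) (PresentedGroup.of a) = PresentedGroup.of (B.obInv a z) := by
  rw [phiHom, PresentedGroup.toGroup.of, obInvAut_of]

/-- The homomorphism `As(X) →* As(Q(X)) ⋊ As(X)` sending `ι'(x)` to `(ι(x), ι'(x))`. -/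
noncomputable def psi :
    PresentedGroup B.asRels →*
      SemidirectProduct (PresentedGroup B.qRels) (PresentedGroup B.asRels) (phiHom B) :=
  PresentedGroup.toGroup
    (f := fun x => (⟨PresentedGroup.of x, PresentedGroup.of x⟩ :
      SemidirectProduct (PresentedGroup B.qRels) (PresentedGroup B.asRels) (phiHom B)))
    (by
      rintro r ⟨x, y, rfl⟩
      rw [map_mul, map_inv, map_mul, map_mul, mul_inv_eq_one]
      simp only [FreeGroup.lift_apply_of, SemidirectProduct.mul_def]
      refine SemidirectProduct.ext ?_ ?_
      · show PresentedGroup.of x * phiHom B (PresentedGroup.of x)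
            (PresentedGroup.of (B.ob y x)) =
          PresentedGroup.of y * phiHom B (PresentedGroup.of y)
            (PresentedGroup.of (B.ub x y))
        rw [phiHom_of, phiHom_of, obInv_ob]
        show _ = PresentedGroup.of y * PresentedGroup.of (B.q x y)
        exact qrel B x y
      · exact asrel B x y)

lemma psi_of (x : X) :
    psi B (PresentedGroup.of x) =
      (⟨PresentedGroup.of x, PresentedGroup.of x⟩ :
        SemidirectProduct (PresentedGroup B.qRels) (PresentedGroup B.asRels) (phiHom B)) := by
  rw [psi, PresentedGroup.toGroup.of]

lemma psi_right (g : PresentedGroup B.asRels) : (psi B g).right = g := by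
  have h : (SemidirectProduct.rightHom.comp (psi B)) =
      MonoidHom.id (PresentedGroup B.asRels) := by
    refine PresentedGroup.ext fun x => ?_
    rw [MonoidHom.comp_apply, psi_of]
    rfl
  exact DFunLike.congr_fun h g

end BiquandlePhiAux

open BiquandlePhiAux in
/-- With `φ(g,x) = x ⋄ g⁻¹` (where `⋄` is the right `As(X)`-action with
`x ⋄ ι'(y) = x ob y`), there is a unique map `φ_As : As(X) → As(Q(X))` with `φ_As(1) = 1`,
`φ_As(g·ι'(x)) = φ_As(g)·ι(φ(g,x))` and `φ_As(g·ι'(x)⁻¹) = φ_As(g)·ι(φ(g·ι'(x)⁻¹,x))⁻¹`. -/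
theorem phiAs_exists_unique {X : Type*} (B : Biquandle X)
    (act : X → PresentedGroup B.asRels → X)
    (hact1 : ∀ x : X, act x 1 = x)
    (hactmul : ∀ (x : X) (g h : PresentedGroup B.asRels), act x (g * h) = act (act x g) h)
    (hactgen : ∀ x y : X, act x (PresentedGroup.of y) = B.ob x y) :
    ∃! F : PresentedGroup B.asRels → PresentedGroup B.qRels,
      F 1 = 1 ∧
      (∀ (g : PresentedGroup B.asRels) (x : X),
        F (g * PresentedGroup.of x) = F g * PresentedGroup.of (act x g⁻¹)) ∧
      (∀ (g : PresentedGroup B.asRels) (x : X),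
        F (g * (PresentedGroup.of x)⁻¹) =
          F g * (PresentedGroup.of (act x (g * (PresentedGroup.of x)⁻¹)⁻¹) :
            PresentedGroup B.qRels)⁻¹) := by
  have key : ∀ (g : PresentedGroup B.asRels) (a : X),
      phiHom B g (PresentedGroup.of a) = PresentedGroup.of (act a g⁻¹) := by
    let S : Subgroup (PresentedGroup B.asRels) :=
      { carrier := {g | ∀ a : X,
          phiHom B g (PresentedGroup.of a) = PresentedGroup.of (act a g⁻¹)}
        one_mem' := by
          intro a
          rw [map_one, MulAut.one_apply, inv_one, hact1]
        mul_mem' := by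
          intro g h hg hh a
          rw [map_mul, MulAut.mul_apply, hh a, hg (act a h⁻¹), mul_inv_rev, hactmul]
        inv_mem' := by
          intro g hg a
          have hb : phiHom B g (PresentedGroup.of (act a g)) = PresentedGroup.of a := by
            rw [hg (act a g), ← hactmul, mul_inv_cancel, hact1]
          rw [inv_inv, ← hb, map_inv, MulAut.inv_def, MulEquiv.symm_apply_apply] }
    intro g
    refine PresentedGroup.generated_by _ S (fun z => ?_) g
    show ∀ a : X, phiHom B (PresentedGroup.of z) (PresentedGroup.of a) =
      PresentedGroup.of (act a ((PresentedGroup.of z : PresentedGroup B.asRels))⁻¹)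
    intro a
    have h1 : B.ob (act a ((PresentedGroup.of z : PresentedGroup B.asRels))⁻¹) z = a := by
      rw [← hactgen _ z, ← hactmul, inv_mul_cancel, hact1]
    have h2 : B.obInv a z = act a ((PresentedGroup.of z : PresentedGroup B.asRels))⁻¹ := by
      conv_lhs => rw [← h1, obInv_ob]
    rw [phiHom_of, h2]
  let F : PresentedGroup B.asRels → PresentedGroup B.qRels := fun g => (psi B g).left
  have hP : ∀ g h : PresentedGroup B.asRels,
      F (g * h) = F g * phiHom B g ((psi B h).left) := by
    intro g h
    show (psi B (g * h)).left = _
    rw [map_mul, SemidirectProduct.mul_left, psi_right]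
  have hF1 : F 1 = 1 := by
    show (psi B 1).left = 1
    rw [map_one]
    rfl
  have hF2 : ∀ (g : PresentedGroup B.asRels) (x : X),
      F (g * PresentedGroup.of x) = F g * PresentedGroup.of (act x g⁻¹) := by
    intro g x
    rw [hP, psi_of]
    show F g * phiHom B g (PresentedGroup.of x) = _
    rw [key]
  have hF3 : ∀ (g : PresentedGroup B.asRels) (x : X),
      F (g * (PresentedGroup.of x)⁻¹) =
        F g * (PresentedGroup.of (act x (g * (PresentedGroup.of x)⁻¹)⁻¹) :
          PresentedGroup B.qRels)⁻¹ := by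
    intro g x
    have e0 : (psi B ((PresentedGroup.of x : PresentedGroup B.asRels)⁻¹)).left =
        (PresentedGroup.of (act x (PresentedGroup.of x)) : PresentedGroup B.qRels)⁻¹ := by
      rw [map_inv, psi_of]
      show phiHom B ((PresentedGroup.of x : PresentedGroup B.asRels)⁻¹)
          ((PresentedGroup.of x : PresentedGroup B.qRels)⁻¹) = _
      rw [map_inv (phiHom B ((PresentedGroup.of x : PresentedGroup B.asRels)⁻¹)), key, inv_inv]
    rw [hP, e0, map_inv (phiHom B g), key, mul_inv_rev, inv_inv, hactmul]
  refine ⟨F, ⟨hF1, hF2, hF3⟩, ?_⟩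
  rintro F' ⟨h1, h2, h3⟩
  funext g
  have hg : g ∈ Subgroup.closure
      (Set.range (PresentedGroup.of : X → PresentedGroup B.asRels)) := by
    rw [PresentedGroup.closure_range_of]
    exact Subgroup.mem_top g
  induction hg using Subgroup.closure_induction_right with
  | one => rw [h1, hF1]
  | mul_right w hw y hy ih =>
    obtain ⟨z, rfl⟩ := hy
    rw [h2, hF2, ih]
  | mul_inv_cancel w hw y hy ih =>
    obtain ⟨z, rfl⟩ := hy
    rw [h3, hF3, ih]
end

section
/- Let X be a biquandle, ψ : As(Q(X)) × X → X the map satisfying ψ(1,a)=a, ψ(p·ι(b),a) = ψ(p,a) ob ψ(p,b), ψ(p·ι(b)⁻¹,a) = ψ(p,a) ob⁻¹ k(ψ(p,b)), and ψ_As : As(Q(X)) → As(X) the map satisfying ψ_As(1)=1, ψ_As(p·ι(b)) = ψ_As(p)·ι'(ψ(p,b)), ψ_As(p·ι(b)⁻¹) = ψ_As(p)·ι'(ψ(p·ι(b)⁻¹,b))⁻¹. Then ψ_As : As(Q(X)) → As(X) is a bijection, and the map ψ̃ : As(Q(X)) × X → As(X) × X defined by ψ̃(p,a) = (ψ_As(p),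 ψ(p,a)) is a bijection; moreover the map φ̃(g,x) = (φ_As(g), φ(g,x)), where φ(g,x) = x ⋄ g⁻¹ and φ_As is as in the paper, is a two-sided inverse of ψ̃. -/
private lemma right_ind_presented {α : Type*} {rels : Set (FreeGroup α)}
    (P : PresentedGroup rels → Prop)
    (h1 : P 1) (hof : ∀ p x, P p → P (p * PresentedGroup.of x))
    (hinv : ∀ p x, P p → P (p * (PresentedGroup.of x)⁻¹)) : ∀ p, P p := by
  classical
  intro p
  induction p using QuotientGroup.induction_on with
  | H f =>
    rw [← FreeGroup.mk_toWord (x := f)]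
    generalize f.toWord = L
    induction L using List.reverseRecOn with
    | nil => exact h1
    | append_singleton L a ih =>
      obtain ⟨x, b⟩ := a
      have hsplit : (FreeGroup.mk (L ++ [(x, b)]) : FreeGroup α)
          = FreeGroup.mk L * FreeGroup.mk [(x, b)] := (FreeGroup.mul_mk).symm
      cases b
      · have hfx : (FreeGroup.mk [(x, false)] : FreeGroup α) = (FreeGroup.of x)⁻¹ := by
          rw [show ((FreeGroup.of x)⁻¹ : FreeGroup α)
            = FreeGroup.mk (FreeGroup.invRev [(x,true)]) from FreeGroup.inv_mk]
          rfl
        rw [hsplit, hfx]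
        exact hinv _ x ih
      · have hfx : (FreeGroup.mk [(x, true)] : FreeGroup α) = FreeGroup.of x := rfl
        rw [hsplit, hfx]
        exact hof _ x ih

/-- `ψ_As : As(Q(X)) → As(X)` is a bijection, the map
`ψ̃(p,a) = (ψ_As(p), ψ(p,a))` is a bijection, and `φ̃(g,x) = (φ_As(g), φ(g,x))`
(with `φ(g,x) = x ⋄ g⁻¹`) is a two-sided inverse of `ψ̃`. -/
theorem psi_tilde_bijective {X : Type*} (B : Biquandle X)
    (k : X → X) (hk : ∀ x, B.ob (k x) (k x) = x)
    (ψ : PresentedGroup B.qRels × X → X)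
    (h1 : ∀ a : X, ψ (1, a) = a)
    (h2 : ∀ (p : PresentedGroup B.qRels) (a b : X),
      ψ (p * PresentedGroup.of b, a) = B.ob (ψ (p, a)) (ψ (p, b)))
    (h3 : ∀ (p : PresentedGroup B.qRels) (a b : X),
      ψ (p * (PresentedGroup.of b)⁻¹, a) = B.obInv (ψ (p, a)) (k (ψ (p, b))))
    (ψAs : PresentedGroup B.qRels → PresentedGroup B.asRels)
    (hA1 : ψAs 1 = 1)
    (hA2 : ∀ (p : PresentedGroup B.qRels) (b : X),
      ψAs (p * PresentedGroup.of b) = ψAs p * PresentedGroup.of (ψ (p, b)))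
    (hA3 : ∀ (p : PresentedGroup B.qRels) (b : X),
      ψAs (p * (PresentedGroup.of b)⁻¹) =
        ψAs p * (PresentedGroup.of (ψ (p * (PresentedGroup.of b)⁻¹, b)) :
          PresentedGroup B.asRels)⁻¹)
    (act : X → PresentedGroup B.asRels → X)
    (hact1 : ∀ x : X, act x 1 = x)
    (hactmul : ∀ (x : X) (g h : PresentedGroup B.asRels), act x (g * h) = act (act x g) h)
    (hactgen : ∀ x y : X, act x (PresentedGroup.of y) = B.ob x y)
    (φAs : PresentedGroup B.asRels → PresentedGroup B.qRels)
    (hP1 : φAs 1 = 1)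
    (hP2 : ∀ (g : PresentedGroup B.asRels) (x : X),
      φAs (g * PresentedGroup.of x) = φAs g * PresentedGroup.of (act x g⁻¹))
    (hP3 : ∀ (g : PresentedGroup B.asRels) (x : X),
      φAs (g * (PresentedGroup.of x)⁻¹) =
        φAs g * (PresentedGroup.of (act x (g * (PresentedGroup.of x)⁻¹)⁻¹) :
          PresentedGroup B.qRels)⁻¹) :
    Function.Bijective ψAs ∧
    Function.Bijective (fun pa : PresentedGroup B.qRels × X => (ψAs pa.1, ψ pa)) ∧
    (∀ (p : PresentedGroup B.qRels) (a : X),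
      (φAs (ψAs p), act (ψ (p, a)) (ψAs p)⁻¹) = (p, a)) ∧
    (∀ (g : PresentedGroup B.asRels) (x : X),
      (ψAs (φAs g), ψ (φAs g, act x g⁻¹)) = (g, x)) := by
  -- basic facts about obInv
  have obInv_ob : ∀ (y z : X), B.obInv (B.ob z y) y = z := fun y z =>
    (Equiv.ofBijective _ (B.ob_bij y)).symm_apply_apply z
  have ob_obInv : ∀ (y x : X), B.ob (B.obInv x y) y = x := fun y x =>
    (Equiv.ofBijective _ (B.ob_bij y)).apply_symm_apply x
  -- injectivity of the diagonal map x ↦ x ob x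
  have d_inj : ∀ x y : X, B.ob x x = B.ob y y → x = y := by
    intro x y h
    have hinj := B.H_bij.injective (a₁ := (x, x)) (a₂ := (y, y))
    have hxy : ((x, x) : X × X) = (y, y) := by
      apply hinj
      show (B.ob x x, B.ub x x) = (B.ob y y, B.ub y y)
      rw [B.bq1, B.bq1, h]
    exact congrArg Prod.fst hxy
  have obInv_k : ∀ y : X, B.obInv y (k y) = k y := by
    intro y
    have h := obInv_ob (k y) (k y)
    rwa [hk y] at h
  have k_ob_self : ∀ x : X, k (B.ob x x) = x := fun x => d_inj _ _ (hk (B.ob x x))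
  -- action facts
  have act_cancel : ∀ (x : X) (g : PresentedGroup B.asRels), act (act x g) g⁻¹ = x := by
    intro x g; rw [← hactmul, mul_inv_cancel, hact1]
  have act_cancel' : ∀ (x : X) (g : PresentedGroup B.asRels), act (act x g⁻¹) g = x := by
    intro x g; rw [← hactmul, inv_mul_cancel, hact1]
  have act_inv_gen : ∀ (x c : X), act x (PresentedGroup.of c : PresentedGroup B.asRels)⁻¹
      = B.obInv x c := by
    intro x c
    have hx : B.ob (act x (PresentedGroup.of c : PresentedGroup B.asRels)⁻¹) c = x := by
      rw [← hactgen, ← hactmul, inv_mul_cancel, hact1]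
    have h := obInv_ob c (act x (PresentedGroup.of c : PresentedGroup B.asRels)⁻¹)
    rw [hx] at h
    exact h.symm
  have hc : ∀ (p : PresentedGroup B.qRels) (b : X),
      ψ (p * (PresentedGroup.of b)⁻¹, b) = k (ψ (p, b)) := by
    intro p b; rw [h3]; exact obInv_k _
  -- main induction: ψ (p, a) = act a (ψAs p) and φAs (ψAs p) = p
  have hAB : ∀ p : PresentedGroup B.qRels,
      (∀ a : X, ψ (p, a) = act a (ψAs p)) ∧ φAs (ψAs p) = p := by
    apply right_ind_presented
    · constructor
      · intro a; rw [h1, hA1, hact1]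
      · rw [hA1, hP1]
    · rintro p b ⟨ihA, ihB⟩
      constructor
      · intro a
        rw [h2, hA2, hactmul, hactgen, ihA a]
      · rw [hA2, hP2, ihB, ihA b, act_cancel]
    · rintro p b ⟨ihA, ihB⟩
      constructor
      · intro a
        rw [h3, hA3, hc p b, hactmul, act_inv_gen, ihA a]
      · rw [hA3, hc p b, hP3, ihB, mul_inv_rev, inv_inv, hactmul, hactgen, hk, ihA b,
          act_cancel]
  have hA : ∀ (p : PresentedGroup B.qRels) (a : X), ψ (p, a) = act a (ψAs p) :=
    fun p => (hAB p).1
  have hB : ∀ p : PresentedGroup B.qRels, φAs (ψAs p) = p := fun p => (hAB p).2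
  -- second induction: ψAs (φAs g) = g
  have hD : ∀ g : PresentedGroup B.asRels, ψAs (φAs g) = g := by
    apply right_ind_presented
    · rw [hP1, hA1]
    · intro g x ihD
      rw [hP2, hA2, hA, ihD, act_cancel']
    · intro g x ihD
      rw [hP3, hA3, ihD, hc, hA, ihD, mul_inv_rev, inv_inv, hactmul, hactgen,
        act_cancel', k_ob_self]
  -- assemble
  have bullet3 : ∀ (p : PresentedGroup B.qRels) (a : X),
      (φAs (ψAs p), act (ψ (p, a)) (ψAs p)⁻¹) = (p, a) := by
    intro p a
    rw [hB, hA, act_cancel]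
  have bullet4 : ∀ (g : PresentedGroup B.asRels) (x : X),
      (ψAs (φAs g), ψ (φAs g, act x g⁻¹)) = (g, x) := by
    intro g x
    rw [hD, hA, hD, act_cancel']
  refine ⟨⟨?_, ?_⟩, ⟨?_, ?_⟩, bullet3, bullet4⟩
  · exact Function.LeftInverse.injective (g := φAs) hB
  · exact Function.RightInverse.surjective (g := φAs) hD
  · intro ⟨p, a⟩ ⟨q, b⟩ h
    have h' := congrArg (fun gx : PresentedGroup B.asRels × X => (φAs gx.1, act gx.2 gx.1⁻¹)) h
    simpa only [bullet3] using h'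
  · intro ⟨g, x⟩
    exact ⟨(φAs g, act x g⁻¹), bullet4 g x⟩
end

section
/- Let X be a biquandle and Q(X) its associated quandle with a * b := (a ub b) ob⁻¹ b. Then for each y ∈ X, the right translation x ↦ x ob y is an automorphism of the quandle Q(X); i.e., it is a bijection of X and (a * b) ob y = (a ob y) * (b ob y) for all a, b ∈ X. Consequently, for every g ∈ As(X), the map x ↦ x ⋄ g (the right As(X)-action with x ⋄ ι'(y) = x ob y) is a quandle automorphism of Q(X). -/
/-! Since `(· ob b)` is injective and `(a * b) ob b = a ub b`, the identity `(a * b) ob y =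
(a ob y) * (b ob y)` can be checked after applying `(· ob (b ob y))`, where it is (BQ3) for `ob`
followed by the mixed (BQ3). For a general `g ∈ As(X)`, the elements of a group acting on the right
that preserve a binary operation form a subgroup, and it contains the generators of `As(X)`. -/

namespace Biquandle

variable {X : Type*} (B : Biquandle X)

lemma ob_q_self (a b : X) : B.ob (B.q a b) b = B.ub a b :=
  (Equiv.ofBijective _ (B.ob_bij b)).apply_symm_apply _

lemma ob_q_s9 (a b y : X) : B.ob (B.q a b) y = B.q (B.ob a y) (B.ob b y) := by
  apply (B.ob_bij (B.ob b y)).injective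
  dsimp only
  rw [B.bq3_ob, ob_q_self, ob_q_self, B.bq3_mix]

end Biquandle

section RightAction

variable {X G : Type*} [Group G]

lemma bijective_of_rightAction (act : X → G → X) (one : ∀ x, act x 1 = x)
    (mul : ∀ x g h, act x (g * h) = act (act x g) h) (g : G) :
    Function.Bijective (act · g) :=
  Function.bijective_iff_has_inverse.2
    ⟨(act · g⁻¹), fun x => by simp [← mul, one], fun x => by simp [← mul, one]⟩

def preservingSubgroup (op : X → X → X) (act : X → G → X) (one : ∀ x, act x 1 = x)
    (mul : ∀ x g h, act x (g * h) = act (act x g) h) : Subgroup G where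
  carrier := {g | ∀ a b, act (op a b) g = op (act a g) (act b g)}
  one_mem' := by simp [one]
  mul_mem' {g h} hg hh a b := by rw [mul, mul, mul, hg, hh]
  inv_mem' {g} hg a b := by
    apply (bijective_of_rightAction act one mul g).injective
    simp only [hg _ _, ← mul, inv_mul_cancel, one]

end RightAction

/-- For each `y`, the right translation `x ↦ x ob y` is an automorphism of the
quandle `Q(X)`; consequently, for every `g ∈ As(X)`, the map `x ↦ x ⋄ g` of the right
`As(X)`-action `⋄` (with `x ⋄ ι'(y) = x ob y`) is a quandle automorphism of `Q(X)`. -/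
theorem ob_quandle_automorphism {X : Type*} (B : Biquandle X) :
    (∀ y : X, Function.Bijective (fun x => B.ob x y) ∧
      ∀ a b : X, B.ob (B.q a b) y = B.q (B.ob a y) (B.ob b y)) ∧
    (∀ act : X → PresentedGroup B.asRels → X,
      (∀ x : X, act x 1 = x) →
      (∀ (x : X) (g h : PresentedGroup B.asRels), act x (g * h) = act (act x g) h) →
      (∀ x y : X, act x (PresentedGroup.of y) = B.ob x y) →
      ∀ g : PresentedGroup B.asRels, Function.Bijective (fun x => act x g) ∧
        ∀ a b : X, act (B.q a b) g = B.q (act a g) (act b g)) := by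
  refine ⟨fun y => ⟨B.ob_bij y, fun a b => B.ob_q_s9 a b y⟩, fun act one mul act_of g => ?_⟩
  refine ⟨bijective_of_rightAction act one mul g, ?_⟩
  have generators_mem (y : X) : PresentedGroup.of y ∈ preservingSubgroup B.q act one mul :=
    fun a b => by simp only [act_of, B.ob_q_s9]
  exact PresentedGroup.generated_by _ _ generators_mem g
end

section
/- Let X be a biquandle, A an abelian group, n ≥ 1, and θ : Xⁿ → A a biquandle n-cocycle. Define ψ*θ : As(Q(X)) × Xⁿ → A by (ψ*θ)(p, a₁,…,aₙ) := θ(ψ(p,a₁),…,ψ(p,aₙ)). Then ψ*θ is a shadow quandle n-cocycle of the quandle Q(X): for all p ∈ As(Q(X)) and a₁,…,a_{n+1} ∈ X, Σ_{i=1}^{n+1} (−1)^{i−1} [ (ψ*θ)(p, a₁,…,a_{i−1}, a_{i+1},…,a_{n+1}) − (ψ*θ)(p·ι(aᵢ), a₁*aᵢ,…,a_{i−1}*aᵢ, a_{i+1},…,a_{n+1}) ] = 0, and (ψ*θ)(p, a₁,…,a_{j−1}, b, b, a_{j+2},…,aₙ) = 0 for every j. -/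
/-- If `θ : Xⁿ → A` is a biquandle n-cocycle, then its pullback
`(ψ*θ)(p, a₁,…,aₙ) := θ(ψ(p,a₁),…,ψ(p,aₙ))` is a shadow quandle n-cocycle of `Q(X)`. -/
theorem pullback_shadow_cocycle {X : Type*} (B : Biquandle X)
    {A : Type*} [AddCommGroup A]
    (k : X → X) (hk : ∀ x, B.ob (k x) (k x) = x)
    (ψ : PresentedGroup B.qRels × X → X)
    (h1 : ∀ a : X, ψ (1, a) = a)
    (h2 : ∀ (p : PresentedGroup B.qRels) (a b : X),
      ψ (p * PresentedGroup.of b, a) = B.ob (ψ (p, a)) (ψ (p, b)))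
    (h3 : ∀ (p : PresentedGroup B.qRels) (a b : X),
      ψ (p * (PresentedGroup.of b)⁻¹, a) = B.obInv (ψ (p, a)) (k (ψ (p, b))))
    (n : ℕ) (hn : 1 ≤ n) (θ : (Fin n → X) → A)
    -- `θ` is a biquandle n-cocycle:
    (hcocycle : ∀ x : Fin (n + 1) → X,
      ∑ i : Fin (n + 1), ((-1 : ℤ) ^ (i : ℕ)) •
        (θ (fun j => x (i.succAbove j)) -
         θ (fun j => if ((i.succAbove j : ℕ) < (i : ℕ))
            then B.ub (x (i.succAbove j)) (x i)
            else B.ob (x (i.succAbove j)) (x i))) = 0)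
    (hdeg : ∀ (x : Fin n → X) (j : Fin n) (hj : (j : ℕ) + 1 < n),
      x j = x ⟨(j : ℕ) + 1, hj⟩ → θ x = 0) :
    -- then `ψ*θ` is a shadow quandle n-cocycle of `Q(X)`:
    (∀ (p : PresentedGroup B.qRels) (a : Fin (n + 1) → X),
      ∑ i : Fin (n + 1), ((-1 : ℤ) ^ (i : ℕ)) •
        (θ (fun j => ψ (p, a (i.succAbove j))) -
         θ (fun j => ψ (p * PresentedGroup.of (a i),
            if ((i.succAbove j : ℕ) < (i : ℕ))
              then B.q (a (i.succAbove j)) (a i)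
              else a (i.succAbove j)))) = 0) ∧
    (∀ (p : PresentedGroup B.qRels) (x : Fin n → X) (j : Fin n) (hj : (j : ℕ) + 1 < n),
      x j = x ⟨(j : ℕ) + 1, hj⟩ → θ (fun i => ψ (p, x i)) = 0) := by
  have ob_obInv : ∀ x y : X, B.ob (B.obInv x y) y = x := fun x y =>
    (Equiv.ofBijective _ (B.ob_bij y)).apply_symm_apply x
  have ob_q : ∀ x y z : X, B.ob (B.q x y) z = B.q (B.ob x z) (B.ob y z) := by
    intro x y z
    apply (B.ob_bij (B.ob y z)).injective
    show B.ob (B.ob (B.q x y) z) (B.ob y z) = B.ob (B.q (B.ob x z) (B.ob y z)) (B.ob y z)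
    rw [B.bq3_ob (B.q x y) z y]
    show B.ob (B.ob (B.obInv (B.ub x y) y) y) (B.ub z y) =
      B.ob (B.obInv (B.ub (B.ob x z) (B.ob y z)) (B.ob y z)) (B.ob y z)
    rw [ob_obInv, ob_obInv, B.bq3_mix]
  have obInv_q : ∀ x y w : X, B.obInv (B.q x y) w = B.q (B.obInv x w) (B.obInv y w) := by
    intro x y w
    apply (B.ob_bij w).injective
    show B.ob (B.obInv (B.q x y) w) w = B.ob (B.q (B.obInv x w) (B.obInv y w)) w
    rw [ob_obInv, ob_q, ob_obInv, ob_obInv]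
  have ob_q_self : ∀ x y : X, B.ob (B.q x y) y = B.ub x y := fun x y =>
    ob_obInv (B.ub x y) y
  -- ψ(p, ·) is a quandle morphism
  set P : PresentedGroup B.qRels → Prop :=
    fun p => ∀ a b, ψ (p, B.q a b) = B.q (ψ (p, a)) (ψ (p, b)) with hPdef
  have hP1 : P 1 := fun a b => by rw [h1, h1, h1]
  have step : ∀ (p : PresentedGroup B.qRels) (c : X), P p → P (p * PresentedGroup.of c) := by
    intro p c hp a b
    rw [h2, h2, h2, hp, ob_q]
  have stepInv : ∀ (p : PresentedGroup B.qRels) (c : X), P p → P (p * (PresentedGroup.of c)⁻¹) := by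
    intro p c hp a b
    rw [h3, h3, h3, hp, obInv_q]
  have psi_q : ∀ p, P p := by
    have key : ∀ p ∈ Subgroup.closure
        (Set.range (PresentedGroup.of : X → PresentedGroup B.qRels)),
        ∀ q, P q ↔ P (q * p) := by
      intro p hp
      refine Subgroup.closure_induction (p := fun g _ => ∀ q, P q ↔ P (q * g))
        ?_ ?_ ?_ ?_ hp
      · rintro x ⟨c, rfl⟩ q
        constructor
        · exact step q c
        · intro h
          have := stepInv _ c h
          rwa [mul_inv_cancel_right] at this
      · intro q; rw [mul_one]
      · intro x y _ _ hx hy q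
        rw [hx q, hy (q * x), mul_assoc]
      · intro x _ hx q
        have := hx (q * x⁻¹)
        rw [inv_mul_cancel_right] at this
        exact this.symm
    intro p
    have hmem : p ∈ Subgroup.closure
        (Set.range (PresentedGroup.of : X → PresentedGroup B.qRels)) := by
      rw [PresentedGroup.closure_range_of]; trivial
    have := (key p hmem 1).mp hP1
    rwa [one_mul] at this
  constructor
  · intro p a
    rw [← hcocycle (fun t => ψ (p, a t))]
    refine Finset.sum_congr rfl fun i _ => ?_
    congr 2
    refine congrArg θ (funext fun j => ?_)
    split_ifs with h
    · rw [h2, psi_q, ob_q_self]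
    · rw [h2]
  · intro p x j hj h
    exact hdeg _ j hj (by simp [h])
end

section
/- Let Q be a quandle with associated group As(Q) (presented by generators Q and relations x·y = y·(x*y)) and canonical map ι : Q → As(Q). Define two binary operations on As(Q) × Q by (g,a) ub (h,b) := (g·ι(b), a*b) and (g,a) ob (h,b) := (h·ι(b)·h⁻¹·g, a). Then (As(Q) × Q, ub, ob) is a biquandle: it satisfies (BQ1), (BQ2) (including bijectivity of the map H), and the three identities (BQ3). -/
/-- A quandle: a set with a binary operation `*` (written `op`) that is idempotent,
has bijective right translations, and is right self-distributive. -/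
structure QuandleR (Q : Type*) where
  op : Q → Q → Q
  idem : ∀ a, op a a = a
  op_bij : ∀ b, Function.Bijective fun a => op a b
  distrib : ∀ a b c, op (op a b) c = op (op a c) (op b c)

/-- Relations of the associated group `As(Q)` of a quandle: `x · y = y · (x * y)`. -/
def QuandleR.rels {Q : Type*} (q : QuandleR Q) : Set (FreeGroup Q) :=
  {r | ∃ a b : Q, r = FreeGroup.of a * FreeGroup.of b *
      (FreeGroup.of b * FreeGroup.of (q.op a b))⁻¹}

/-!
Of `ι : Q → As(Q)` the construction only uses the defining relation of `As(Q)` in the form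
`ι (a * b) = ι b⁻¹ · ι a · ι b`, so it works for any group `G` and any map `ι : Q → G` turning the
quandle operation into conjugation. (BQ1) is idempotency, the right translations are products of
a group translation with a quandle translation, `H` is inverted coordinate by coordinate, and in
each (BQ3) identity the `Q`-coordinates agree by right distributivity while the `G`-coordinates
agree after one application of the conjugation rule.
-/
namespace QuandleR

variable {Q : Type*} (q : QuandleR Q)

theorem presentedGroup_of_op (a b : Q) :
    (PresentedGroup.of (q.op a b) : PresentedGroup q.rels)
      = (PresentedGroup.of b)⁻¹ * PresentedGroup.of a * PresentedGroup.of b := by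
  have hrel : (PresentedGroup.of a * PresentedGroup.of b *
      (PresentedGroup.of b * PresentedGroup.of (q.op a b))⁻¹ : PresentedGroup q.rels) = 1 :=
    (QuotientGroup.eq_one_iff _).2 (Subgroup.subset_normalClosure ⟨a, b, rfl⟩)
  rw [mul_inv_eq_one] at hrel
  rw [mul_assoc, hrel]
  group

variable {G : Type*} [Group G] (ι : Q → G)

def horvatUb (p r : G × Q) : G × Q := (p.1 * ι r.2, q.op p.2 r.2)

def horvatOb (p r : G × Q) : G × Q := (r.1 * ι r.2 * r.1⁻¹ * p.1, p.2)

theorem horvatH_bijective :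
    Function.Bijective fun p : (G × Q) × (G × Q) => (horvatOb ι p.2 p.1, horvatUb q ι p.1 p.2) := by
  constructor
  · rintro ⟨⟨g, a⟩, ⟨h, b⟩⟩ ⟨⟨g', a'⟩, ⟨h', b'⟩⟩ hH
    simp only [horvatOb, horvatUb, Prod.mk.injEq] at hH
    obtain ⟨⟨hh, rfl⟩, hg, ha⟩ := hH
    obtain rfl : g = g' := mul_right_cancel hg
    obtain rfl : a = a' := (q.op_bij b).1 ha
    obtain rfl : h = h' := mul_left_cancel hh
    rfl
  · rintro ⟨⟨u, b⟩, ⟨v, c⟩⟩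
    obtain ⟨a, rfl⟩ := (q.op_bij b).2 c
    let g := v * (ι b)⁻¹
    refine ⟨((g, a), ((g * ι a * g⁻¹)⁻¹ * u, b)), ?_⟩
    simp only [horvatOb, horvatUb, g]
    congr 2 <;> group

variable {ι}

def horvatBiquandle (hι : ∀ a b, ι (q.op a b) = (ι b)⁻¹ * ι a * ι b) : Biquandle (G × Q) where
  ub := horvatUb q ι
  ob := horvatOb ι
  bq1 := fun ⟨_, a⟩ => Prod.ext (by simp [horvatUb, horvatOb]) (q.idem a)
  ub_bij := fun ⟨_, b⟩ => (Group.mulRight_bijective _).prodMap (q.op_bij b)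
  ob_bij := fun ⟨h, b⟩ => (Group.mulLeft_bijective (h * ι b * h⁻¹)).prodMap Function.bijective_id
  H_bij := horvatH_bijective q ι
  bq3_ub := fun x y z =>
    Prod.ext (by simp only [horvatUb, horvatOb, hι]; group) (q.distrib x.2 z.2 y.2).symm
  bq3_ob := fun _ _ _ =>
    Prod.ext (by simp only [horvatUb, horvatOb, hι]; group) rfl
  bq3_mix := fun _ _ _ =>
    Prod.ext (by simp only [horvatUb, horvatOb, hι]; group) rfl

end QuandleR

/-- For a quandle `Q`, the operations `(g,a) ub (h,b) := (g·ι(b), a*b)` and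
`(g,a) ob (h,b) := (h·ι(b)·h⁻¹·g, a)` make `As(Q) × Q` a biquandle
(the algebraic model of Horvat's topological biquandle). -/
theorem horvat_biquandle {Q : Type*} (q : QuandleR Q) :
    ∃ B : Biquandle (PresentedGroup q.rels × Q),
      (∀ p r : PresentedGroup q.rels × Q,
        B.ub p r = (p.1 * PresentedGroup.of r.2, q.op p.2 r.2)) ∧
      (∀ p r : PresentedGroup q.rels × Q,
        B.ob p r = (r.1 * PresentedGroup.of r.2 * r.1⁻¹ * p.1, p.2)) :=
  ⟨q.horvatBiquandle q.presentedGroup_of_op, fun _ _ => rfl, fun _ _ => rfl⟩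
end

section
/- In the biquandle ℤ² with operations (x,a) ub (y,b) = (x,a) ob (y,b) = (x+1, a+y) (so the inverse operations are (x,a) ub⁻¹ (y,b) = (x,a) ob⁻¹ (y,b) = (x−1, a−y)), the element (0,0) generates the whole biquandle: the smallest subset of ℤ² containing (0,0) and closed under the operations ub, ob, ub⁻¹, ob⁻¹ is all of ℤ². -/
theorem Int.prod_mk_zero_mem_of_forall_succ_pred {S : Set (ℤ × ℤ)} (h0 : ((0, 0) : ℤ × ℤ) ∈ S)
    (hsucc : ∀ n : ℤ, ((n, 0) : ℤ × ℤ) ∈ S → ((n + 1, 0) : ℤ × ℤ) ∈ S)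
    (hpred : ∀ n : ℤ, ((n, 0) : ℤ × ℤ) ∈ S → ((n - 1, 0) : ℤ × ℤ) ∈ S) (n : ℤ) :
    ((n, 0) : ℤ × ℤ) ∈ S := by
  induction n using Int.induction_on with
  | zero => exact h0
  | succ k ih => exact hsucc k ih
  | pred k ih => exact hpred (-k) ih

theorem int2_generated_by_zero_general (S : Set (ℤ × ℤ))
    (h0 : ((0, 0) : ℤ × ℤ) ∈ S)
    (hub : ∀ p ∈ S, ∀ r ∈ S, ((p.1 + 1, p.2 + r.1) : ℤ × ℤ) ∈ S)
    (hubinv : ∀ p ∈ S, ∀ r ∈ S, ((p.1 - 1, p.2 - r.1) : ℤ × ℤ) ∈ S) :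
    S = Set.univ := by
  have haxis : ∀ n : ℤ, ((n, 0) : ℤ × ℤ) ∈ S :=
    Int.prod_mk_zero_mem_of_forall_succ_pred h0
      (fun n hn => by simpa using hub (n, 0) hn (0, 0) h0)
      (fun n hn => by simpa using hubinv (n, 0) hn (0, 0) h0)
  refine Set.eq_univ_of_forall fun ⟨x, a⟩ => ?_
  simpa using hub (x - 1, 0) (haxis _) (a, 0) (haxis _)

/-- In the biquandle `ℤ²` with
`(x,a) ub (y,b) = (x,a) ob (y,b) = (x+1, a+y)` (whose inverse operations are
`(x,a) ub⁻¹ (y,b) = (x,a) ob⁻¹ (y,b) = (x−1, a−y)`), the element `(0,0)` generates the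
whole biquandle: the smallest subset containing `(0,0)` and closed under
`ub, ob, ub⁻¹, ob⁻¹` is all of `ℤ²`. -/
theorem int2_generated_by_zero (S : Set (ℤ × ℤ))
    (h0 : ((0, 0) : ℤ × ℤ) ∈ S)
    (hub : ∀ p ∈ S, ∀ r ∈ S, ((p.1 + 1, p.2 + r.1) : ℤ × ℤ) ∈ S)
    (hob : ∀ p ∈ S, ∀ r ∈ S, ((p.1 + 1, p.2 + r.1) : ℤ × ℤ) ∈ S)
    (hubinv : ∀ p ∈ S, ∀ r ∈ S, ((p.1 - 1, p.2 - r.1) : ℤ × ℤ) ∈ S)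
    (hobinv : ∀ p ∈ S, ∀ r ∈ S, ((p.1 - 1, p.2 - r.1) : ℤ × ℤ) ∈ S) :
    S = Set.univ :=
  int2_generated_by_zero_general S h0 hub hubinv
end

section
/- There is no biquandle isomorphism between the biquandle ℤ (with x ub y = x ob y = x+1) and the biquandle ℤ² (with (x,a) ub (y,b) = (x,a) ob (y,b) = (x+1, a+y)); i.e., there is no bijection f : ℤ → ℤ² such that f(x ub y) = f(x) ub f(y) and f(x ob y) = f(x) ob f(y) for all x, y ∈ ℤ. (In the biquandle ℤ all right translations (· ub y) coincide, while in ℤ² the right translations (· ub (y,b)) and (· ub (y',b')) differ whenever y ≠ y'.) -/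
/-- There is no biquandle isomorphism between the biquandle `ℤ`
(with `x ub y = x ob y = x + 1`) and the biquandle `ℤ²`
(with `(x,a) ub (y,b) = (x,a) ob (y,b) = (x+1, a+y)`): no bijection `f : ℤ → ℤ × ℤ`
satisfies `f(x ub y) = f(x) ub f(y)` and `f(x ob y) = f(x) ob f(y)` for all `x, y`. -/
theorem no_iso_int_int2 :
    ¬ ∃ f : ℤ → ℤ × ℤ, Function.Bijective f ∧
      (∀ x y : ℤ, f (x + 1) = ((f x).1 + 1, (f x).2 + (f y).1)) ∧
      (∀ x y : ℤ, f (x + 1) = ((f x).1 + 1, (f x).2 + (f y).1)) := by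
  rintro ⟨f, hb, h, -⟩
  have h0 := h 0 0
  have h1 := h 0 1
  have e1 : (f 0).2 + (f 0).1 = (f 0).2 + (f 1).1 := by
    have := h0.symm.trans h1
    exact (Prod.mk.injEq _ _ _ _ ▸ this).2
  have e2 : (f 1).1 = (f 0).1 + 1 := by
    have := congrArg Prod.fst h0
    simpa using this
  omega
end
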